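/- Let p, q, r ∈ [1, ∞] satisfy 1/p + 1/q = 1 + 1/r. Suppose ψ : (0, ∞) → (0, ∞) satisfies ψ(t) · t^{(1−1/q)/2} → 0 as t → 0⁺. Then there exists G ∈ L^p(ℝ) such that the quotient ‖G∗Θ_t‖_r / ψ(t) is not bounded as t → 0⁺; that is, the growth estimate ‖f∗Θ_t‖_r = O(t^{−(1−1/q)/2}) as t → 0⁺ cannot be improved to O(ψ(t)) uniformly over L^p. -/

import Mathlib

open MeasureTheory Real Filter
open scoped ENNReal Topology

noncomputable def heatKernel (t x : ℝ) : ℝ :=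
  Real.exp (-x ^ 2 / (4 * t)) / (2 * Real.sqrt (Real.pi * t))

lemma heatKernel_nonneg (t x : ℝ) : 0 ≤ heatKernel t x := by
  unfold heatKernel; positivity

lemma heatKernel_measurable (t : ℝ) : Measurable (heatKernel t) := by
  unfold heatKernel; fun_prop

lemma heatKernel_le {t : ℝ} (ht : 0 < t) (x : ℝ) :
    heatKernel t x ≤ 1 / (2 * Real.sqrt (Real.pi * t)) := by
  have hd : 0 < 2 * Real.sqrt (Real.pi * t) := by positivity
  unfold heatKernel
  gcongr
  rw [Real.exp_le_one_iff]
  exact div_nonpos_of_nonpos_of_nonneg (by simp [sq_nonneg]) (by linarith)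

lemma heatKernel_ge {t x : ℝ} (ht : 0 < t) (hx : |x| ≤ Real.sqrt t) :
    Real.exp (-4⁻¹) / (2 * Real.sqrt (Real.pi * t)) ≤ heatKernel t x := by
  have hd : 0 < 2 * Real.sqrt (Real.pi * t) := by positivity
  unfold heatKernel
  gcongr
  have hx2 : x ^ 2 ≤ t := by
    have h1 : x ^ 2 ≤ (Real.sqrt t) ^ 2 := by
      rw [← sq_abs]
      exact pow_le_pow_left₀ (abs_nonneg x) hx 2
    rwa [Real.sq_sqrt ht.le] at h1
  have h4t : (0:ℝ) < 4 * t := by linarith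
  rw [neg_div, neg_le_neg_iff, div_le_iff₀ h4t]
  linarith

lemma heatKernel_integrable {t : ℝ} (ht : 0 < t) : Integrable (heatKernel t) := by
  have hfun : heatKernel t = fun x =>
      Real.exp (-(1/(4*t)) * x ^ 2) / (2 * Real.sqrt (Real.pi * t)) := by
    funext x
    unfold heatKernel
    congr 1
    ring
  rw [hfun]
  exact (integrable_exp_neg_mul_sq (show (0:ℝ) < 1/(4*t) by positivity)).div_const _

set_option maxHeartbeats 1000000 in
theorem heatKernel_estimate_sharp_zero (p q r : ℝ≥0∞)
    (hp : 1 ≤ p) (hq : 1 ≤ q) (hr : 1 ≤ r) (hpqr : 1 / p + 1 / q = 1 + 1 / r)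
    (ψ : ℝ → ℝ) (hψpos : ∀ t > 0, 0 < ψ t)
    (hψ : Tendsto (fun t : ℝ => ψ t * t ^ ((1 - (1 / q).toReal) / 2)) (𝓝[>] 0) (𝓝 0)) :
    ∃ G : ℝ → ℝ, MemLp G p (volume : Measure ℝ) ∧
      ¬ ∃ C : ℝ, ∀ᶠ t in 𝓝[>] (0 : ℝ),
        (eLpNorm (fun x : ℝ => ∫ y : ℝ, G (x - y) * heatKernel t y) r
            (volume : Measure ℝ)).toReal / ψ t ≤ C := by
  -- basic exponent facts
  have hp0 : p ≠ 0 := (zero_lt_one.trans_le hp).ne'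
  have hq0 : q ≠ 0 := (zero_lt_one.trans_le hq).ne'
  have hr0 : r ≠ 0 := (zero_lt_one.trans_le hr).ne'
  set βp : ℝ := (1/p).toReal with hβp
  set βq : ℝ := (1/q).toReal with hβq
  set βr : ℝ := (1/r).toReal with hβr
  have hinvp : 1/p ≤ 1 := by rw [one_div]; exact ENNReal.inv_le_one.mpr hp
  have hinvq : 1/q ≤ 1 := by rw [one_div]; exact ENNReal.inv_le_one.mpr hq
  have hinvr : 1/r ≤ 1 := by rw [one_div]; exact ENNReal.inv_le_one.mpr hr
  have hfp : 1/p ≠ ∞ := (hinvp.trans_lt ENNReal.one_lt_top).ne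
  have hfq : 1/q ≠ ∞ := (hinvq.trans_lt ENNReal.one_lt_top).ne
  have hfr : 1/r ≠ ∞ := (hinvr.trans_lt ENNReal.one_lt_top).ne
  have hβp1 : βp ≤ 1 := by
    have := ENNReal.toReal_mono (by simp) hinvp; rw [hβp]; simpa using this
  have hβq1 : βq ≤ 1 := by
    have := ENNReal.toReal_mono (by simp) hinvq; rw [hβq]; simpa using this
  have hβp0 : 0 ≤ βp := ENNReal.toReal_nonneg
  have hβr0 : 0 ≤ βr := ENNReal.toReal_nonneg
  have hβq0 : 0 ≤ βq := ENNReal.toReal_nonneg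
  have hsum : βp + βq = 1 + βr := by
    have h := congrArg ENNReal.toReal hpqr
    rwa [ENNReal.toReal_add hfp hfq, ENNReal.toReal_add (by simp) hfr,
      ENNReal.toReal_one] at h
  set α : ℝ := (1 - βq)/2 with hα
  have hα0 : 0 ≤ α := by rw [hα]; linarith
  have hαpr : α = (βp - βr)/2 := by rw [hα]; linarith
  -- choose the time sequence
  have hsel : ∀ n : ℕ, ∃ u : ℝ, 0 < u ∧ u < 1/(n+1) ∧
      ψ u * u ^ ((1 - (1/q).toReal)/2) < (4:ℝ)⁻¹ ^ n := by
    intro n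
    have h1 : ∀ᶠ u in 𝓝[>] (0:ℝ), ψ u * u ^ ((1 - (1/q).toReal)/2) < (4:ℝ)⁻¹ ^ n :=
      hψ.eventually_lt_const (by positivity)
    have h2 : ∀ᶠ u in 𝓝[>] (0:ℝ), u < 1/((n:ℝ)+1) :=
      eventually_nhdsWithin_of_eventually_nhds (Iio_mem_nhds (by positivity))
    have h3 : ∀ᶠ u in 𝓝[>] (0:ℝ), 0 < u := eventually_mem_nhdsWithin
    obtain ⟨u, hu3, hu2, hu1⟩ := (h3.and (h2.and h1)).exists
    exact ⟨u, hu3, hu2, hu1⟩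
  choose t ht0 htlt hψt using hsel
  have ht1 : ∀ n, t n ≤ 1 := by
    intro n
    have h := htlt n
    have h1 : 1/((n:ℝ)+1) ≤ 1 := by
      rw [div_le_one (by positivity)]
      have : (0:ℝ) ≤ (n:ℝ) := Nat.cast_nonneg n
      linarith
    linarith
  set s : ℕ → ℝ := fun n => Real.sqrt (t n) with hs
  have hs0 : ∀ n, 0 < s n := fun n => Real.sqrt_pos.mpr (ht0 n)
  have hs1 : ∀ n, s n ≤ 1 := fun n =>
    (Real.sqrt_le_sqrt (ht1 n)).trans_eq Real.sqrt_one
  set a : ℕ → ℝ := fun n => (2:ℝ)⁻¹ ^ n * (t n) ^ (-(βp/2)) with ha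
  have ha0 : ∀ n, 0 < a n := by
    intro n
    have := ht0 n
    rw [ha]
    positivity
  set I : ℕ → Set ℝ := fun n => Set.Ioc (3*(n:ℝ)) (3*(n:ℝ) + s n) with hI
  have hI_unique : ∀ (m n : ℕ) (x : ℝ), x ∈ I m → x ∈ I n → m = n := by
    intro m n x hm hn
    rw [hI] at hm hn
    simp only [Set.mem_Ioc] at hm hn
    have hsm := hs1 m
    have hsn := hs1 n
    have h1 : (m:ℝ) < (n:ℝ) + 1 := by nlinarith [hm.1, hm.2, hn.1, hn.2]
    have h2 : (n:ℝ) < (m:ℝ) + 1 := by nlinarith [hm.1, hm.2, hn.1, hn.2]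
    have h1' : m < n + 1 := by exact_mod_cast h1
    have h2' : n < m + 1 := by exact_mod_cast h2
    omega
  set GE : ℝ → ℝ≥0∞ := fun x =>
    ∑' n, Set.indicator (I n) (fun _ => ENNReal.ofReal (a n)) x with hGE
  set G : ℝ → ℝ := fun x => (GE x).toReal with hG
  have hGE_eq : ∀ (n : ℕ) (x : ℝ), x ∈ I n → GE x = ENNReal.ofReal (a n) := by
    intro n x hx
    rw [hGE]
    refine (tsum_eq_single n fun m hm => ?_).trans (Set.indicator_of_mem hx _)
    exact Set.indicator_of_notMem (fun hxm => hm (hI_unique m n x hxm hx)) _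
  have hGE_zero : ∀ x : ℝ, (∀ n, x ∉ I n) → GE x = 0 := by
    intro x hx
    rw [hGE]
    exact (tsum_congr fun n => Set.indicator_of_notMem (hx n) _).trans tsum_zero
  have hGval : ∀ (n : ℕ) (x : ℝ), x ∈ I n → G x = a n := by
    intro n x hx
    simp only [hG]
    rw [hGE_eq n x hx, ENNReal.toReal_ofReal (ha0 n).le]
  have hGnn : ∀ x, 0 ≤ G x := fun x => ENNReal.toReal_nonneg
  have hGEmeas : Measurable GE :=
    Measurable.ennreal_tsum fun n => measurable_const.indicator measurableSet_Ioc
  have hGmeas : Measurable G := hGEmeas.ennreal_toReal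
  have hGnorm : ∀ x, (‖G x‖₊ : ℝ≥0∞) = GE x := by
    intro x
    by_cases h : ∃ n, x ∈ I n
    · obtain ⟨n, hn⟩ := h
      rw [hGval n x hn, hGE_eq n x hn]; exact Real.enorm_eq_ofReal (ha0 n).le
    · push_neg at h
      have h0 : G x = 0 := by simp only [hG]; rw [hGE_zero x h]; simp
      rw [h0, hGE_zero x h]
      simp
  -- the basic rpow computation
  have hacn : ∀ (c : ℝ) (n : ℕ), a n ^ c * s n
      = ((2:ℝ)⁻¹ ^ c) ^ n * (t n) ^ ((1 - βp * c)/2) := by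
    intro c n
    have h0 : (0:ℝ) < t n := ht0 n
    have e1 : a n ^ c = ((2:ℝ)⁻¹ ^ c) ^ n * (t n) ^ (-(βp/2) * c) := by
      rw [ha]
      rw [Real.mul_rpow (by positivity) (by positivity)]
      congr 1
      · rw [← Real.rpow_natCast ((2:ℝ)⁻¹) n, ← Real.rpow_mul (by norm_num),
          mul_comm, Real.rpow_mul (by norm_num), Real.rpow_natCast]
      · rw [← Real.rpow_mul h0.le]
    have e2 : s n = (t n) ^ ((1:ℝ)/2) := by
      simp only [hs]
      exact Real.sqrt_eq_rpow (t n)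
    rw [e1, e2, mul_assoc, ← Real.rpow_add h0]
    congr 2
    ring
  -- lintegral of powers of G
  have hGE_rpow : ∀ c : ℝ, 0 < c → ∫⁻ x, GE x ^ c
      = ∑' n, ENNReal.ofReal (a n ^ c * s n) := by
    intro c hc
    have hpt : ∀ x, GE x ^ c
        = ∑' n, Set.indicator (I n) (fun _ => ENNReal.ofReal (a n ^ c)) x := by
      intro x
      by_cases h : ∃ n, x ∈ I n
      · obtain ⟨n, hn⟩ := h
        rw [hGE_eq n x hn,
          (tsum_eq_single n fun m hm =>
            Set.indicator_of_notMem (fun hxm => hm (hI_unique m n x hxm hn)) _),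
          Set.indicator_of_mem hn, ENNReal.ofReal_rpow_of_nonneg (ha0 n).le hc.le]
      · push_neg at h
        rw [hGE_zero x h, ENNReal.zero_rpow_of_pos hc,
          (tsum_congr fun n => Set.indicator_of_notMem (h n) _).trans tsum_zero]
    calc ∫⁻ x, GE x ^ c
        = ∫⁻ x, ∑' n, Set.indicator (I n) (fun _ => ENNReal.ofReal (a n ^ c)) x := by
          exact lintegral_congr hpt
      _ = ∑' n, ∫⁻ x, Set.indicator (I n) (fun _ => ENNReal.ofReal (a n ^ c)) x := by
          exact lintegral_tsum fun n =>
            (measurable_const.indicator measurableSet_Ioc).aemeasurable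
      _ = ∑' n, ENNReal.ofReal (a n ^ c * s n) := by
          refine tsum_congr fun n => ?_
          rw [lintegral_indicator_const (by rw [hI]; exact measurableSet_Ioc)]
          rw [hI]
          simp only [Real.volume_Ioc, add_sub_cancel_left]
          rw [← ENNReal.ofReal_mul (Real.rpow_nonneg (ha0 n).le c)]
  -- G is in L^1
  have hGL1 : ∫⁻ x, (‖G x‖₊ : ℝ≥0∞) ≤ ∑' n : ℕ, ENNReal.ofReal ((2:ℝ)⁻¹ ^ n) := by
    have h := hGE_rpow 1 zero_lt_one
    simp only [ENNReal.rpow_one, Real.rpow_one] at h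
    calc ∫⁻ x, (‖G x‖₊ : ℝ≥0∞) = ∫⁻ x, GE x := lintegral_congr fun x => hGnorm x
      _ = ∑' n, ENNReal.ofReal (a n * s n) := h
      _ ≤ ∑' n : ℕ, ENNReal.ofReal ((2:ℝ)⁻¹ ^ n) := by
          refine ENNReal.tsum_le_tsum fun n => ENNReal.ofReal_le_ofReal ?_
          have h1 := hacn 1 n
          simp only [Real.rpow_one] at h1
          rw [h1]
          have h2 : (t n) ^ ((1 - βp * 1)/2) ≤ 1 :=
            Real.rpow_le_one (ht0 n).le (ht1 n) (by linarith)
          calc (2:ℝ)⁻¹ ^ n * (t n) ^ ((1 - βp * 1)/2) ≤ (2:ℝ)⁻¹ ^ n * 1 := by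
                refine mul_le_mul_of_nonneg_left h2 (by positivity)
            _ = (2:ℝ)⁻¹ ^ n := mul_one _
  have hgeo : ∀ x : ℝ, 0 ≤ x → x < 1 →
      (∑' n : ℕ, ENNReal.ofReal (x ^ n)) < ∞ := by
    intro x hx0 hx1
    have : ∀ n : ℕ, ENNReal.ofReal (x ^ n) = (ENNReal.ofReal x) ^ n := fun n =>
      ENNReal.ofReal_pow hx0 n
    rw [tsum_congr this, ENNReal.tsum_geometric]
    rw [ENNReal.inv_lt_top]
    exact tsub_pos_of_lt (ENNReal.ofReal_lt_one.mpr hx1)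
  have hGL1fin : ∫⁻ x, (‖G x‖₊ : ℝ≥0∞) < ∞ :=
    hGL1.trans_lt (hgeo 2⁻¹ (by norm_num) (by norm_num))
  have hGmem1 : MemLp G 1 volume := by
    refine ⟨hGmeas.aestronglyMeasurable, ?_⟩
    rwa [eLpNorm_one_eq_lintegral_enorm]
  have hGint : Integrable G := memLp_one_iff_integrable.mp hGmem1
  -- G is in L^p
  have hmemG : MemLp G p volume := by
    by_cases hptop : p = ∞
    · rw [hptop]
      refine memLp_top_of_bound hGmeas.aestronglyMeasurable 1
        (Eventually.of_forall fun x => ?_)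
      have hβp0' : βp = 0 := by rw [hβp, hptop]; simp
      rw [Real.norm_of_nonneg (hGnn x)]
      by_cases h : ∃ n, x ∈ I n
      · obtain ⟨n, hn⟩ := h
        rw [hGval n x hn, ha]
        simp only [hβp0', neg_zero, zero_div, Real.rpow_zero, mul_one]
        calc (2:ℝ)⁻¹ ^ n ≤ 1 ^ n := pow_le_pow_left₀ (by norm_num) (by norm_num) n
          _ = 1 := one_pow n
      · push_neg at h
        have h0 : G x = 0 := by simp only [hG]; rw [hGE_zero x h]; simp
        rw [h0]; norm_num
    · have hpr1 : 1 ≤ p.toReal := by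
        have := ENNReal.toReal_mono hptop hp
        simpa using this
      have hpr0 : 0 < p.toReal := by linarith
      refine ⟨hGmeas.aestronglyMeasurable, ?_⟩
      rw [eLpNorm_eq_lintegral_rpow_enorm_toReal hp0 hptop]
      refine ENNReal.rpow_lt_top_of_nonneg (by positivity) ?_
      have hβppr : βp * p.toReal = 1 := by
        rw [hβp, one_div, ENNReal.toReal_inv]
        exact inv_mul_cancel₀ hpr0.ne'
      have hcalc : ∫⁻ x, (‖G x‖₊ : ℝ≥0∞) ^ p.toReal
          = ∑' n : ℕ, ENNReal.ofReal (((2:ℝ)⁻¹ ^ p.toReal) ^ n) := by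
        calc ∫⁻ x, (‖G x‖₊ : ℝ≥0∞) ^ p.toReal = ∫⁻ x, GE x ^ p.toReal :=
            lintegral_congr fun x => by rw [hGnorm x]
          _ = ∑' n, ENNReal.ofReal (a n ^ p.toReal * s n) := hGE_rpow _ hpr0
          _ = ∑' n : ℕ, ENNReal.ofReal (((2:ℝ)⁻¹ ^ p.toReal) ^ n) := by
              refine tsum_congr fun n => ?_
              congr 1
              rw [hacn _ n, hβppr]
              norm_num
      rw [show (∫⁻ x, ‖G x‖ₑ ^ p.toReal) = _ from hcalc]
      exact (hgeo _ (by positivity)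
        (Real.rpow_lt_one (by norm_num) (by norm_num) hpr0)).ne
  refine ⟨G, hmemG, ?_⟩
  rintro ⟨C, hC⟩
  set c0 : ℝ := Real.exp (-4⁻¹) / (2 * Real.sqrt Real.pi) with hc0def
  have hc0 : 0 < c0 := by rw [hc0def]; positivity
  -- measurability of the convolution
  have hconv_meas : ∀ τ : ℝ, AEStronglyMeasurable
      (fun x : ℝ => ∫ y : ℝ, G (x - y) * heatKernel τ y) volume := by
    intro τ
    refine (StronglyMeasurable.integral_prod_right ?_).aestronglyMeasurable
    exact ((hGmeas.comp (measurable_fst.sub measurable_snd)).mul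
      ((heatKernel_measurable τ).comp measurable_snd)).stronglyMeasurable
  -- uniform bound of the convolution
  have hKb : ∀ (n : ℕ) (x : ℝ), ‖∫ y : ℝ, G (x - y) * heatKernel (t n) y‖
      ≤ 1/(2*Real.sqrt (Real.pi * t n)) * ∫ z, G z := by
    intro n x
    have hτ := ht0 n
    have hGsh : Integrable (fun y => G (x - y)) := hGint.comp_sub_left x
    calc ‖∫ y : ℝ, G (x - y) * heatKernel (t n) y‖
        ≤ ∫ y : ℝ, ‖G (x - y) * heatKernel (t n) y‖ := norm_integral_le_integral_norm _
      _ ≤ ∫ y : ℝ, 1/(2*Real.sqrt (Real.pi * t n)) * G (x - y) := by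
          refine integral_mono_of_nonneg (Eventually.of_forall fun y => norm_nonneg _)
            (hGsh.const_mul _) (Eventually.of_forall fun y => ?_)
          simp only [norm_mul, Real.norm_of_nonneg (hGnn _),
            Real.norm_of_nonneg (heatKernel_nonneg _ _)]
          rw [mul_comm (1/(2*Real.sqrt (Real.pi * t n)))]
          exact mul_le_mul_of_nonneg_left (heatKernel_le hτ y) (hGnn _)
      _ = 1/(2*Real.sqrt (Real.pi * t n)) * ∫ y : ℝ, G (x - y) :=
          integral_const_mul _ _
      _ = 1/(2*Real.sqrt (Real.pi * t n)) * ∫ z, G z := by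
          rw [integral_sub_left_eq_self (fun z => G z) volume x]
  -- L¹ bound of the convolution
  have hconvL1 : ∀ n : ℕ,
      ∫⁻ x, (‖∫ y : ℝ, G (x - y) * heatKernel (t n) y‖₊ : ℝ≥0∞) < ∞ := by
    intro n
    have hτ := ht0 n
    have hFmeas : AEMeasurable (Function.uncurry fun x y : ℝ =>
        ((‖G (x - y)‖₊ : ℝ≥0∞) * (‖heatKernel (t n) y‖₊ : ℝ≥0∞)))
        (volume.prod volume) := by
      apply Measurable.aemeasurable
      exact ((hGmeas.comp (measurable_fst.sub measurable_snd)).nnnorm.coe_nnreal_ennreal).mul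
        (((heatKernel_measurable (t n)).comp measurable_snd).nnnorm.coe_nnreal_ennreal)
    have hΘmeas : Measurable fun y => (‖heatKernel (t n) y‖₊ : ℝ≥0∞) :=
      (heatKernel_measurable (t n)).nnnorm.coe_nnreal_ennreal
    calc ∫⁻ x, (‖∫ y : ℝ, G (x - y) * heatKernel (t n) y‖₊ : ℝ≥0∞)
        ≤ ∫⁻ x, ∫⁻ y, (‖G (x - y)‖₊ : ℝ≥0∞) * (‖heatKernel (t n) y‖₊ : ℝ≥0∞) := by
          refine lintegral_mono fun x => ?_
          refine (enorm_integral_le_lintegral_enorm _).trans_eq ?_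
          refine lintegral_congr fun y => ?_
          simp [nnnorm_mul]; rfl
      _ = ∫⁻ y, ∫⁻ x, (‖G (x - y)‖₊ : ℝ≥0∞) * (‖heatKernel (t n) y‖₊ : ℝ≥0∞) :=
          lintegral_lintegral_swap hFmeas
      _ = ∫⁻ y, (∫⁻ x, (‖G x‖₊ : ℝ≥0∞)) * (‖heatKernel (t n) y‖₊ : ℝ≥0∞) := by
          refine lintegral_congr fun y => ?_
          rw [lintegral_mul_const' _ _ ENNReal.coe_ne_top]
          congr 1
          exact lintegral_sub_right_eq_self (fun x => (‖G x‖₊ : ℝ≥0∞)) y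
      _ = (∫⁻ x, (‖G x‖₊ : ℝ≥0∞)) * ∫⁻ y, (‖heatKernel (t n) y‖₊ : ℝ≥0∞) :=
          lintegral_const_mul _ hΘmeas
      _ < ∞ := ENNReal.mul_lt_top hGL1fin (heatKernel_integrable hτ).2
  -- finiteness of the r-seminorm of the convolution
  have hconvFin : ∀ n : ℕ,
      eLpNorm (fun x : ℝ => ∫ y : ℝ, G (x - y) * heatKernel (t n) y) r volume ≠ ∞ := by
    intro n
    by_cases hrt : r = ∞
    · rw [hrt, eLpNorm_exponent_top]
      exact ((eLpNormEssSup_le_of_ae_bound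
        (Eventually.of_forall (hKb n))).trans_lt ENNReal.ofReal_lt_top).ne
    · have hrr1 : 1 ≤ r.toReal := by
        have := ENNReal.toReal_mono hrt hr
        simpa using this
      have hrr : 0 < r.toReal := by linarith
      rw [eLpNorm_eq_lintegral_rpow_enorm_toReal hr0 hrt]
      refine (ENNReal.rpow_lt_top_of_nonneg (by positivity) ?_).ne
      set K' : ℝ≥0∞ := ENNReal.ofReal (1/(2*Real.sqrt (Real.pi * t n)) * ∫ z, G z) with hK'
      have hpt : ∀ x : ℝ, (‖∫ y : ℝ, G (x - y) * heatKernel (t n) y‖₊ : ℝ≥0∞) ^ r.toReal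
          ≤ (‖∫ y : ℝ, G (x - y) * heatKernel (t n) y‖₊ : ℝ≥0∞) * K' ^ (r.toReal - 1) := by
        intro x
        have hle : (‖∫ y : ℝ, G (x - y) * heatKernel (t n) y‖₊ : ℝ≥0∞) ≤ K' := by
          refine (ofReal_norm _).symm.trans_le ?_; rw [hK']
          exact ENNReal.ofReal_le_ofReal (hKb n x)
        calc (‖∫ y : ℝ, G (x - y) * heatKernel (t n) y‖₊ : ℝ≥0∞) ^ r.toReal
            = (‖∫ y : ℝ, G (x - y) * heatKernel (t n) y‖₊ : ℝ≥0∞) ^ (1 + (r.toReal - 1)) := by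
              congr 1; ring
          _ = (‖∫ y : ℝ, G (x - y) * heatKernel (t n) y‖₊ : ℝ≥0∞) ^ (1:ℝ) *
              (‖∫ y : ℝ, G (x - y) * heatKernel (t n) y‖₊ : ℝ≥0∞) ^ (r.toReal - 1) :=
              ENNReal.rpow_add_of_nonneg _ _ zero_le_one (by linarith)
          _ ≤ (‖∫ y : ℝ, G (x - y) * heatKernel (t n) y‖₊ : ℝ≥0∞) ^ (1:ℝ) * K' ^ (r.toReal - 1) :=
              mul_le_mul_right (ENNReal.rpow_le_rpow hle (by linarith)) _
          _ = (‖∫ y : ℝ, G (x - y) * heatKernel (t n) y‖₊ : ℝ≥0∞) * K' ^ (r.toReal - 1) := by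
              rw [ENNReal.rpow_one]
      refine ne_of_lt ?_
      calc ∫⁻ x, (‖∫ y : ℝ, G (x - y) * heatKernel (t n) y‖₊ : ℝ≥0∞) ^ r.toReal
          ≤ ∫⁻ x, (‖∫ y : ℝ, G (x - y) * heatKernel (t n) y‖₊ : ℝ≥0∞) * K' ^ (r.toReal - 1) :=
            lintegral_mono hpt
        _ = (∫⁻ x, (‖∫ y : ℝ, G (x - y) * heatKernel (t n) y‖₊ : ℝ≥0∞)) * K' ^ (r.toReal - 1) :=
            lintegral_mul_const' _ _ (ENNReal.rpow_ne_top_of_nonneg (by linarith) ENNReal.ofReal_ne_top)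
        _ < ∞ := ENNReal.mul_lt_top (hconvL1 n)
            (ENNReal.rpow_lt_top_of_nonneg (by linarith) ENNReal.ofReal_ne_top)
  -- pointwise lower bound of the convolution on I n
  have hconv_low : ∀ n : ℕ, ∀ x ∈ I n,
      c0 * a n ≤ ∫ y : ℝ, G (x - y) * heatKernel (t n) y := by
    intro n x hx
    have hτ := ht0 n
    have hsn : s n = Real.sqrt (t n) := by rw [hs]
    have hxm : 3*(n:ℝ) < x ∧ x ≤ 3*(n:ℝ) + s n := by
      simpa only [hI, Set.mem_Ioc] using hx
    set J : Set ℝ := Set.Ico (x - 3*(n:ℝ) - s n) (x - 3*(n:ℝ)) with hJ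
    have hJI : ∀ y ∈ J, x - y ∈ I n := by
      intro y hy
      simp only [hJ, Set.mem_Ico] at hy
      simp only [hI, Set.mem_Ioc]
      constructor
      · linarith [hy.2]
      · linarith [hy.1]
    have hJabs : ∀ y ∈ J, |y| ≤ Real.sqrt (t n) := by
      intro y hy
      simp only [hJ, Set.mem_Ico] at hy
      rw [abs_le, ← hsn]
      constructor
      · linarith [hy.1, hxm.2]
      · linarith [hy.2, hxm.1, hs0 n]
    have hGsh : Integrable (fun y => G (x - y)) := hGint.comp_sub_left x
    have hbint : Integrable (fun y => G (x - y) * heatKernel (t n) y) := by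
      have h := Integrable.bdd_mul hGsh (heatKernel_measurable (t n)).aestronglyMeasurable
        (c := 1/(2*Real.sqrt (Real.pi * t n))) (Eventually.of_forall fun y => by
          rw [Real.norm_of_nonneg (heatKernel_nonneg _ _)]; exact heatKernel_le hτ y)
      simpa [mul_comm] using h
    have hmono : ∀ y : ℝ, Set.indicator J
        (fun _ => a n * (Real.exp (-4⁻¹) / (2*Real.sqrt (Real.pi * t n)))) y
        ≤ G (x - y) * heatKernel (t n) y := by
      intro y
      by_cases hy : y ∈ J
      · rw [Set.indicator_of_mem hy, hGval n _ (hJI y hy)]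
        exact mul_le_mul_of_nonneg_left (heatKernel_ge hτ (hJabs y hy)) (ha0 n).le
      · rw [Set.indicator_of_notMem hy]
        exact mul_nonneg (hGnn _) (heatKernel_nonneg _ _)
    have hlow := integral_mono_of_nonneg
      (Eventually.of_forall fun y => Set.indicator_nonneg
        (fun _ _ => by positivity) y)
      hbint (Eventually.of_forall hmono)
    rw [integral_indicator_const _ (by rw [hJ]; exact measurableSet_Ico)] at hlow
    have hvol : (volume J).toReal = s n := by
      rw [hJ, Real.volume_Ico,
        show x - 3*(n:ℝ) - (x - 3*(n:ℝ) - s n) = s n by ring,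
        ENNReal.toReal_ofReal (hs0 n).le]
    rw [smul_eq_mul, measureReal_def, hvol] at hlow
    refine le_of_eq_of_le ?_ hlow
    rw [hc0def, hsn, Real.sqrt_mul Real.pi_pos.le]
    have h1 : Real.sqrt Real.pi ≠ 0 := ne_of_gt (Real.sqrt_pos.mpr Real.pi_pos)
    have h2 : Real.sqrt (t n) ≠ 0 := ne_of_gt (Real.sqrt_pos.mpr hτ)
    field_simp
  -- eLpNorm lower bound
  have hvolI : ∀ n : ℕ, volume (I n) = ENNReal.ofReal (s n) := by
    intro n
    rw [hI]
    simp [Real.volume_Ioc]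
  have hlowE : ∀ n : ℕ,
      ENNReal.ofReal (c0 * a n) * (ENNReal.ofReal (s n)) ^ (1/r.toReal)
      ≤ eLpNorm (fun x : ℝ => ∫ y : ℝ, G (x - y) * heatKernel (t n) y) r volume := by
    intro n
    have hmono : ∀ x : ℝ, ‖Set.indicator (I n) (fun _ => c0 * a n) x‖
        ≤ ‖∫ y : ℝ, G (x - y) * heatKernel (t n) y‖ := by
      intro x
      by_cases hx : x ∈ I n
      · rw [Set.indicator_of_mem hx,
          Real.norm_of_nonneg (mul_pos hc0 (ha0 n)).le, Real.norm_eq_abs]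
        exact (hconv_low n x hx).trans (le_abs_self _)
      · rw [Set.indicator_of_notMem hx, norm_zero]
        exact norm_nonneg _
    have h := eLpNorm_mono (p := r) (μ := (volume : Measure ℝ)) hmono
    rw [eLpNorm_indicator_const' (by rw [hI]; exact measurableSet_Ioc)
      (by rw [hvolI n]; exact ne_of_gt (ENNReal.ofReal_pos.mpr (hs0 n))) hr0,
      hvolI n, Real.enorm_eq_ofReal (mul_pos hc0 (ha0 n)).le] at h
    exact h
  -- the key estimate
  have hαq : ((1 - (1/q).toReal)/2) = α := by rw [hα, hβq]
  have hβr_eq : 1/r.toReal = βr := by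
    by_cases hrt : r = ∞
    · rw [hβr, hrt]; simp
    · rw [hβr, one_div, one_div, ENNReal.toReal_inv]
  have hfinal : ∀ n : ℕ, c0 * 2 ^ n <
      (eLpNorm (fun x : ℝ => ∫ y : ℝ, G (x - y) * heatKernel (t n) y) r
        volume).toReal / ψ (t n) := by
    intro n
    have hτ := ht0 n
    have hψn := hψpos (t n) hτ
    have h1 : c0 * a n * (s n) ^ (1/r.toReal)
        ≤ (eLpNorm (fun x : ℝ => ∫ y : ℝ, G (x - y) * heatKernel (t n) y) r
          volume).toReal := by
      have h := ENNReal.toReal_mono (hconvFin n) (hlowE n)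
      rwa [ENNReal.toReal_mul, ENNReal.toReal_ofReal (mul_pos hc0 (ha0 n)).le,
        ← ENNReal.toReal_rpow, ENNReal.toReal_ofReal (hs0 n).le] at h
    have e1 : (s n) ^ (1/r.toReal) = (t n) ^ (βr/2) := by
      rw [hβr_eq, hs]
      simp only []
      rw [Real.sqrt_eq_rpow, ← Real.rpow_mul hτ.le]
      congr 1
      ring
    have h2 : c0 * a n * (s n) ^ (1/r.toReal) = c0 * (2:ℝ)⁻¹^n * (t n) ^ (-α) := by
      rw [e1, ha]
      simp only []
      rw [show c0 * ((2:ℝ)⁻¹ ^ n * t n ^ (-(βp/2))) * t n ^ (βr/2)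
          = c0 * (2:ℝ)⁻¹ ^ n * (t n ^ (-(βp/2)) * t n ^ (βr/2)) by ring,
        ← Real.rpow_add hτ]
      congr 1
      rw [hαpr]
      ring
    have h3 : ψ (t n) * (t n) ^ α < (4:ℝ)⁻¹^n := by
      have := hψt n
      rwa [hαq] at this
    have hT : 0 < (t n) ^ α := Real.rpow_pos_of_pos hτ α
    have hgen : ∀ A P T : ℝ, A * T⁻¹ / P = A / (P * T) := by
      intro A P T
      rw [← div_eq_mul_inv, div_div, mul_comm T P]
    have h4 : c0 * (2:ℝ)⁻¹^n * (t n) ^ (-α) / ψ (t n)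
        = c0 * (2:ℝ)⁻¹^n / (ψ (t n) * (t n) ^ α) := by
      rw [Real.rpow_neg hτ.le]
      exact hgen _ _ _
    have h5 : c0 * 2^n < c0 * (2:ℝ)⁻¹^n / (ψ (t n) * (t n) ^ α) := by
      have hlt := div_lt_div_of_pos_left
        (mul_pos hc0 (by positivity : (0:ℝ) < (2:ℝ)⁻¹^n))
        (mul_pos hψn hT) h3
      have heq : c0 * (2:ℝ)⁻¹^n / (4:ℝ)⁻¹^n = c0 * 2^n := by
        rw [mul_div_assoc, ← div_pow]
        norm_num
      rwa [heq] at hlt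
    calc c0 * 2^n < c0 * (2:ℝ)⁻¹^n / (ψ (t n) * (t n) ^ α) := h5
      _ = c0 * (2:ℝ)⁻¹^n * (t n) ^ (-α) / ψ (t n) := h4.symm
      _ = c0 * a n * (s n) ^ (1/r.toReal) / ψ (t n) := by rw [h2]
      _ ≤ _ := (div_le_div_iff_of_pos_right hψn).mpr h1
  -- conclude
  have htend : Tendsto t atTop (𝓝[>] (0:ℝ)) := by
    rw [tendsto_nhdsWithin_iff]
    refine ⟨squeeze_zero (fun n => (ht0 n).le) (fun n => (htlt n).le)
      tendsto_one_div_add_atTop_nhds_zero_nat, Eventually.of_forall fun n => ht0 n⟩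
  have hev1 : ∀ᶠ n : ℕ in atTop,
      (eLpNorm (fun x : ℝ => ∫ y : ℝ, G (x - y) * heatKernel (t n) y) r
        volume).toReal / ψ (t n) ≤ C := htend.eventually hC
  obtain ⟨n0, hn0⟩ := pow_unbounded_of_one_lt (C/c0) (one_lt_two (α := ℝ))
  have hev2 : ∀ᶠ n : ℕ in atTop, C < c0 * 2^n := by
    filter_upwards [eventually_ge_atTop n0] with n hn
    have hle : (2:ℝ)^n0 ≤ 2^n := pow_le_pow_right₀ one_le_two hn
    have hC' : C < c0 * 2^n0 := by
      rw [div_lt_iff₀ hc0] at hn0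
      linarith [hn0]
    nlinarith [hc0.le]
  obtain ⟨n, hn1, hn2⟩ := (hev1.and hev2).exists
  exact absurd hn1 (not_le.mpr (hn2.trans (hfinal n)))
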